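/- Let (S,·,⁻¹) be an inverse semigroup satisfying x^p = x^{p+1} for all x ∈ S, for some p ≥ 1. Then the natural partial order makes S a meet-semilattice, and for all x, y ∈ S the meet is given by inf{x,y} = (x y⁻¹)^p x. -/
import Mathlib


universe u v

/-- An inverse semigroup: every element has a unique (generalized) inverse. -/
class InverseSemigroup (S : Type*) extends Semigroup S, Inv S where
  mul_inv_mul : ∀ x : S, x * x⁻¹ * x = x
  inv_mul_inv : ∀ x : S, x⁻¹ * x * x⁻¹ = x⁻¹
  inv_unique : ∀ x y : S, x * y * x = x → y * x * y = y → y = x⁻¹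

/-- The natural partial order of an inverse semigroup: `x ≤ y` iff `x = x x⁻¹ y`. -/
def natLe {S : Type*} [Mul S] [Inv S] (x y : S) : Prop := x = x * x⁻¹ * y

/-- `z` is the greatest lower bound (meet) of `x` and `y` with respect to `le`. -/
def IsMeetWrt {S : Type*} (le : S → S → Prop) (x y z : S) : Prop :=
  le z x ∧ le z y ∧ ∀ w, le w x → le w y → le w z

/-- `spowM x k = x^(k+1)`, the `(k+1)`-st power in a semigroup. -/
def spowM {S : Type*} [Mul S] (x : S) : ℕ → S
  | 0 => x
  | k + 1 => spowM x k * x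

section Aux

variable {S : Type u} [InverseSemigroup S]

open InverseSemigroup

lemma inv_invS (x : S) : x⁻¹⁻¹ = x :=
  (inv_unique x⁻¹ x (inv_mul_inv x) (mul_inv_mul x)).symm

lemma idem_invS {e : S} (he : e * e = e) : e⁻¹ = e :=
  (inv_unique e e (by rw [he, he]) (by rw [he, he])).symm

lemma idem_mi (x : S) : (x * x⁻¹) * (x * x⁻¹) = x * x⁻¹ := by
  rw [← mul_assoc, mul_inv_mul]

lemma idem_im (x : S) : (x⁻¹ * x) * (x⁻¹ * x) = x⁻¹ * x := by
  rw [← mul_assoc, inv_mul_inv]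

lemma idem_mulS {e f : S} (he : e * e = e) (hf : f * f = f) :
    (e * f) * (e * f) = e * f := by
  have h1 := mul_inv_mul (e * f)
  have h2 := inv_mul_inv (e * f)
  set x := (e * f)⁻¹ with hxdef
  have key : f * x * e = x := by
    rw [hxdef]
    apply InverseSemigroup.inv_unique
    · have hfa := fun t : S ↦ congrArg (· * t) hf
      have hea := fun t : S ↦ congrArg (· * t) he
      simp only [mul_assoc] at hfa hea h1 ⊢
      rw [hfa, hea]
      exact h1
    · have hfa := fun t : S ↦ congrArg (· * t) hf
      have hea := fun t : S ↦ congrArg (· * t) he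
      have h2a := fun t : S ↦ congrArg (· * t) h2
      simp only [mul_assoc] at hfa hea h2a ⊢
      rw [hea, hfa, h2a]
  have hxidem : x * x = x := by
    conv_lhs => rw [← key]
    have h2a := fun t : S ↦ congrArg (· * t) h2
    simp only [mul_assoc] at h2a ⊢
    rw [h2a, ← mul_assoc]
    exact key
  have hef : e * f = x := by
    have h3 := inv_invS (e * f)
    rw [← hxdef] at h3
    rw [idem_invS hxidem] at h3
    exact h3.symm
  rw [hef]
  exact hxidem

lemma idem_commS {e f : S} (he : e * e = e) (hf : f * f = f) : e * f = f * e := by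
  have hef := idem_mulS he hf
  have hfe := idem_mulS hf he
  have h : f * e = (e * f)⁻¹ := by
    apply InverseSemigroup.inv_unique
    · have hea := fun t : S ↦ congrArg (· * t) he
      have hfa := fun t : S ↦ congrArg (· * t) hf
      simp only [mul_assoc] at hea hfa hef ⊢
      rw [hfa, hea]
      exact hef
    · have hea := fun t : S ↦ congrArg (· * t) he
      have hfa := fun t : S ↦ congrArg (· * t) hf
      simp only [mul_assoc] at hea hfa hfe ⊢
      rw [hea, hfa]
      exact hfe
  rw [h, idem_invS hef]

lemma mul_inv_revS (x y : S) : (x * y)⁻¹ = y⁻¹ * x⁻¹ := by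
  symm
  apply InverseSemigroup.inv_unique
  · have hc := idem_commS (idem_mi y) (idem_im x)
    have hca := fun t : S ↦ congrArg (· * t) hc
    have hmy := mul_inv_mul y
    have hxa := fun t : S ↦ congrArg (· * t) (mul_inv_mul x)
    simp only [mul_assoc] at hca hmy hxa ⊢
    rw [hca, hmy, hxa]
  · have hc := idem_commS (idem_im x) (idem_mi y)
    have hca := fun t : S ↦ congrArg (· * t) hc
    have hya := fun t : S ↦ congrArg (· * t) (inv_mul_inv y)
    have hxi := inv_mul_inv x
    simp only [mul_assoc] at hca hya hxi ⊢
    rw [hca, hya, hxi]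

lemma le_idem {g z : S} (hg : g * g = g) : natLe (g * z) z := by
  show g * z = (g * z) * (g * z)⁻¹ * z
  rw [mul_inv_revS, idem_invS hg]
  have hc := idem_commS (idem_mi z) hg
  have hca := fun t : S ↦ congrArg (· * t) hc
  have hga := fun t : S ↦ congrArg (· * t) hg
  have hm := mul_inv_mul z
  simp only [mul_assoc] at hca hga hm ⊢
  rw [hca, hga, hm]

lemma right_le {a b g : S} (hg : g * g = g) (hab : a = b * g) : b * (a⁻¹ * a) = a := by
  rw [hab, mul_inv_revS, idem_invS hg]
  have hc := idem_commS hg (idem_im b)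
  have hca := fun t : S ↦ congrArg (· * t) hc
  have hba := fun t : S ↦ congrArg (· * t) (mul_inv_mul b)
  simp only [mul_assoc] at hca hba ⊢
  rw [hca, hba, hg]

lemma right_antisymm {a b f g : S} (hf : f * f = f) (hg : g * g = g)
    (hab : a = b * g) (hba : b = a * f) : a = b := by
  have h1 : b * (a⁻¹ * a) = a := right_le hg hab
  have h2 : a * (b⁻¹ * b) = b := right_le hf hba
  have hc := idem_commS (idem_im a) (idem_im b)
  have hba2 := h2.symm
  rw [← h1] at hba2
  have hmb := fun t : S ↦ congrArg (· * t) (mul_inv_mul b)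
  simp only [mul_assoc] at hc hmb hba2 h1
  rw [hc, hmb] at hba2
  exact (hba2.trans h1).symm

lemma spow_stab {T : Type v} [Semigroup T] {x : T} {q : ℕ}
    (h : spowM x q = spowM x (q + 1)) : ∀ k, spowM x (q + k) = spowM x q := by
  intro k
  induction k with
  | zero => rfl
  | succ n ih =>
    show spowM x (q + n) * x = spowM x q
    rw [ih]
    exact h.symm

lemma spowM_addS {T : Type v} [Semigroup T] (x : T) (a b : ℕ) :
    spowM x a * spowM x b = spowM x (a + b + 1) := by
  induction b with
  | zero => rfl
  | succ n ih =>
    show spowM x a * (spowM x n * x) = spowM x (a + n + 1) * x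
    rw [← mul_assoc, ih]

lemma spowM_commS {T : Type v} [Semigroup T] (x : T) (k : ℕ) :
    x * spowM x k = spowM x k * x := by
  induction k with
  | zero => rfl
  | succ n ih =>
    show x * (spowM x n * x) = (spowM x n * x) * x
    rw [← mul_assoc, ih]

end Aux

/-- If an inverse semigroup satisfies `x^p = x^(p+1)` for some `p ≥ 1`, then
its natural partial order is a (meet-semilattice) partial order in which the meet of `x` and
`y` is `(x y⁻¹)^p x`. -/
theorem natural_order_meet_formula {S : Type u} [InverseSemigroup S] (p : ℕ) (hp : 1 ≤ p)
    (hpow : ∀ x : S, spowM x (p - 1) = spowM x p) :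
    (∀ x : S, natLe x x) ∧ (∀ x y : S, natLe x y → natLe y x → x = y) ∧
      (∀ x y z : S, natLe x y → natLe y z → natLe x z) ∧
      ∀ x y : S, IsMeetWrt natLe x y (spowM (x * y⁻¹) (p - 1) * x) := by
  open InverseSemigroup in
  obtain ⟨q, rfl⟩ : ∃ q, p = q + 1 := ⟨p - 1, (Nat.succ_pred_eq_of_pos hp).symm⟩
  simp only [Nat.add_sub_cancel] at hpow ⊢
  refine ⟨?_, ?_, ?_, ?_⟩
  · intro x
    exact (mul_inv_mul x).symm
  · intro x y hxy hyx
    have hxy' : x = x * x⁻¹ * y := hxy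
    have hyx' : y = y * y⁻¹ * x := hyx
    rw [hxy'] at hyx'
    have hc := idem_commS (idem_mi y) (idem_mi x)
    have hca := fun t : S ↦ congrArg (· * t) hc
    have hmy := mul_inv_mul y
    simp only [mul_assoc] at hca hmy hyx'
    rw [hca, hmy] at hyx'
    -- hyx' : y = x * (x⁻¹ * y)
    exact (hyx'.trans (by rw [← mul_assoc]; exact hxy'.symm)).symm
  · intro x y z hxy hyz
    have hxy' : x = x * x⁻¹ * y := hxy
    have hyz' : y = y * y⁻¹ * z := hyz
    rw [hyz'] at hxy'
    have hg := idem_mulS (idem_mi x) (idem_mi y)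
    have hx2 : x * x⁻¹ * (y * y⁻¹) * z = x := by
      conv_rhs => rw [hxy']
      simp only [mul_assoc]
    have h := le_idem (z := z) hg
    rw [hx2] at h
    exact h
  · intro x y
    set e := spowM (x * y⁻¹) q with hedef
    have hpu : spowM (x * y⁻¹) q = spowM (x * y⁻¹) (q + 1) := hpow _
    have stab := spow_stab hpu
    have he : e * e = e := by
      rw [hedef, spowM_addS]
      exact stab (q + 1)
    have heu : e * (x * y⁻¹) = e := hpu.symm
    have hue : (x * y⁻¹) * e = e := by
      rw [hedef, spowM_commS]
      exact hpu.symm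
    have hei : e⁻¹ = e := idem_invS he
    have hv : (x * y⁻¹)⁻¹ = y * x⁻¹ := by rw [mul_inv_revS, inv_invS]
    have heu' : e * (y * x⁻¹) = e := by
      calc e * (y * x⁻¹) = e⁻¹ * (x * y⁻¹)⁻¹ := by rw [hei, hv]
        _ = ((x * y⁻¹) * e)⁻¹ := (mul_inv_revS _ _).symm
        _ = e⁻¹ := by rw [hue]
        _ = e := hei
    -- key : e * x = e * y
    have hab : e * x = (e * y) * (x⁻¹ * x) := by
      have h := congrArg (· * x) heu'
      simp only [mul_assoc] at h ⊢
      exact h.symm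
    have hba : e * y = (e * x) * (y⁻¹ * y) := by
      have h := congrArg (· * y) heu
      simp only [mul_assoc] at h ⊢
      exact h.symm
    have hkey : e * x = e * y := right_antisymm (idem_im y) (idem_im x) hab hba
    refine ⟨le_idem he, ?_, ?_⟩
    · rw [show e * x = e * y from hkey]
      exact le_idem he
    · intro w hwx hwy
      have hwx' : w * w⁻¹ * x = w := (show w = w * w⁻¹ * x from hwx).symm
      have hwy' : w * w⁻¹ * y = w := (show w = w * w⁻¹ * y from hwy).symm
      have base : w * w⁻¹ * (x * y⁻¹) = w * w⁻¹ * (y * y⁻¹) := by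
        rw [← mul_assoc, hwx', ← mul_assoc, hwy']
      have claim : ∀ k : ℕ, w * w⁻¹ * (spowM (x * y⁻¹) k) = w * w⁻¹ * (y * y⁻¹) := by
        intro k
        induction k with
        | zero => exact base
        | succ n ih =>
          show w * w⁻¹ * (spowM (x * y⁻¹) n * (x * y⁻¹)) = _
          rw [← mul_assoc, ih]
          have hc2 := idem_commS (idem_mi w) (idem_mi y)
          have hc2a := fun t : S ↦ congrArg (· * t) hc2
          have hc2b := fun t : S ↦ congrArg (· * t) hc2.symm
          have hwxa := fun t : S ↦ congrArg (· * t) hwx'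
          have hwya := fun t : S ↦ congrArg (· * t) hwy'
          have hyy := idem_mi y
          simp only [mul_assoc] at hc2a hc2b hwxa hwya hyy ⊢
          rw [hc2a, hwxa, ← hwya, hc2b, hyy]
      show w = w * w⁻¹ * (e * x)
      rw [← mul_assoc, claim q]
      have hc2 := idem_commS (idem_mi w) (idem_mi y)
      have hc2a := fun t : S ↦ congrArg (· * t) hc2
      have hc2b := fun t : S ↦ congrArg (· * t) hc2.symm
      have hwxn := hwx'
      have hwyn := hwy'
      have hmy := mul_inv_mul y
      simp only [mul_assoc] at hc2a hc2b hwxn hwyn hmy ⊢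
      rw [hc2a, hwxn]
      conv_rhs => rw [← hwyn]
      rw [hc2b, hmy, hwyn]
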